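/- arXiv:2112.11697 — 2 statements merged into one kernel-verified Lean document; each statement's English description precedes it below -/
import Mathlib

section
/- Let R be a ring and Δ a multiplicatively closed subset of R consisting of central non-zero-divisors. Then R is LNZS if and only if Δ^{-1}R is LNZS. -/
/-- A ring is LNZS if the left annihilator of every nilpotent element is a two-sided ideal. -/
def IsLNZS (R : Type*) [Ring R] : Prop :=
  ∀ a : R, IsNilpotent a → ∃ I : TwoSidedIdeal R, ∀ x : R, x ∈ I ↔ x * a = 0

/-- A central submonoid of a ring is a left Ore set. -/
def centralOreSet {R : Type*} [Ring R] (Δ : Submonoid R)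
    (hc : ∀ u ∈ Δ, ∀ r : R, u * r = r * u) : OreLocalization.OreSet Δ where
  ore_right_cancel r₁ r₂ s h := ⟨s, by rw [hc s.1 s.2 r₁, hc s.1 s.2 r₂, h]⟩
  oreNum r _ := r
  oreDenom _ s := s
  ore_eq r s := hc s.1 s.2 r

section helpers

open OreLocalization

variable {R : Type*} [Ring R] {Δ : Submonoid R} [OreLocalization.OreSet Δ]

lemma central_oreDiv_mul (hc : ∀ u ∈ Δ, ∀ r : R, u * r = r * u)
    (r₁ r₂ : R) (s₁ s₂ : Δ) :
    (r₁ /ₒ s₁) * (r₂ /ₒ s₂) = (r₁ * r₂) /ₒ (s₂ * s₁) :=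
  oreDiv_mul_char r₁ r₂ s₁ s₂ r₁ s₂ (hc s₂.1 s₂.2 r₁)

lemma central_oreDiv_eq_zero
    (hc : ∀ u ∈ Δ, ∀ r : R, u * r = r * u)
    (hnzd : ∀ u ∈ Δ, ∀ r : R, (r * u = 0 → r = 0) ∧ (u * r = 0 → r = 0))
    {r : R} {s : Δ} : r /ₒ s = 0 ↔ r = 0 := by
  constructor
  · intro h
    rw [OreLocalization.zero_def, oreDiv_eq_iff] at h
    obtain ⟨u, v, h1, h2⟩ := h
    simp only [Submonoid.smul_def, smul_eq_mul, mul_zero, Submonoid.coe_one, mul_one] at h1 h2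
    have key : (u : R) * r = 0 := by
      rw [h2, mul_assoc, hc s.1 s.2 r, ← mul_assoc, ← h1, zero_mul]
    exact (hnzd u.1 u.2 r).2 key
  · rintro rfl
    exact OreLocalization.zero_oreDiv' s

lemma central_oreDiv_pow (hc : ∀ u ∈ Δ, ∀ r : R, u * r = r * u)
    (r : R) (s : Δ) (n : ℕ) : (r /ₒ s) ^ n = (r ^ n) /ₒ (s ^ n) := by
  induction n with
  | zero => simp [pow_zero, OreLocalization.one_def]
  | succ n ih =>
    rw [pow_succ, ih, central_oreDiv_mul hc, ← pow_succ, ← pow_succ']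

lemma central_isNilpotent_of (hc : ∀ u ∈ Δ, ∀ r : R, u * r = r * u)
    (hnzd : ∀ u ∈ Δ, ∀ r : R, (r * u = 0 → r = 0) ∧ (u * r = 0 → r = 0))
    {r : R} {s : Δ} (h : IsNilpotent (r /ₒ s)) : IsNilpotent r := by
  obtain ⟨n, hn⟩ := h
  rw [central_oreDiv_pow hc] at hn
  exact ⟨n, (central_oreDiv_eq_zero hc hnzd).mp hn⟩

end helpers

theorem isLNZS_iff_localization_isLNZS (R : Type*) [Ring R] (Δ : Submonoid R)
    (hc : ∀ u ∈ Δ, ∀ r : R, u * r = r * u)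
    (hnzd : ∀ u ∈ Δ, ∀ r : R, (r * u = 0 → r = 0) ∧ (u * r = 0 → r = 0)) :
    letI := centralOreSet Δ hc
    (IsLNZS R ↔ IsLNZS (OreLocalization Δ R)) := by
  letI := centralOreSet Δ hc
  constructor
  · -- R LNZS → localization LNZS
    intro hR α hα
    induction α using OreLocalization.ind with
    | _ a s =>
      have ha : IsNilpotent a := central_isNilpotent_of hc hnzd hα
      obtain ⟨I, hI⟩ := hR a ha
      refine ⟨TwoSidedIdeal.mk' {β | β * (a /ₒ s) = 0}
        (by simp)
        (fun {x y} h1 h2 => by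
          simp only [Set.mem_setOf_eq] at h1 h2 ⊢
          rw [add_mul, h1, h2, add_zero])
        (fun {x} h => by
          simp only [Set.mem_setOf_eq] at h ⊢
          rw [neg_mul, h, neg_zero])
        (fun {x y} h => by
          simp only [Set.mem_setOf_eq] at h ⊢
          rw [mul_assoc, h, mul_zero])
        ?_, fun x => TwoSidedIdeal.mem_mk' _ _ _ _ _ _ x⟩
      intro x y hx
      simp only [Set.mem_setOf_eq] at *
      induction x using OreLocalization.ind with
      | _ p t =>
        induction y using OreLocalization.ind with
        | _ q u =>
          rw [central_oreDiv_mul hc, central_oreDiv_eq_zero hc hnzd] at hx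
          rw [central_oreDiv_mul hc, central_oreDiv_mul hc,
            central_oreDiv_eq_zero hc hnzd]
          exact (hI _).mp (I.mul_mem_right p q ((hI p).mpr hx))
  · -- localization LNZS → R LNZS
    intro hL a ha
    have hα : IsNilpotent (a /ₒ (1 : Δ)) := by
      refine ⟨ha.choose, ?_⟩
      rw [central_oreDiv_pow hc, ha.choose_spec]
      exact OreLocalization.zero_oreDiv' _
    obtain ⟨J, hJ⟩ := hL _ hα
    refine ⟨TwoSidedIdeal.mk' {x | x * a = 0}
      (by simp)
      (fun {x y} h1 h2 => by
        simp only [Set.mem_setOf_eq] at h1 h2 ⊢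
        rw [add_mul, h1, h2, add_zero])
      (fun {x} h => by
        simp only [Set.mem_setOf_eq] at h ⊢
        rw [neg_mul, h, neg_zero])
      (fun {x y} h => by
        simp only [Set.mem_setOf_eq] at h ⊢
        rw [mul_assoc, h, mul_zero])
      ?_, fun x => TwoSidedIdeal.mem_mk' _ _ _ _ _ _ x⟩
    intro x y hx
    simp only [Set.mem_setOf_eq] at *
    have hx' : (x /ₒ (1 : Δ)) ∈ J := by
      rw [hJ, central_oreDiv_mul hc, hx]
      exact OreLocalization.zero_oreDiv' _
    have h2 : (x /ₒ (1 : Δ)) * (y /ₒ (1 : Δ)) ∈ J := J.mul_mem_right _ _ hx'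
    rw [hJ, central_oreDiv_mul hc, central_oreDiv_mul hc,
      central_oreDiv_eq_zero hc hnzd] at h2
    exact h2
end

section
/- Let α be an endomorphism of a ring R satisfying the α-condition (ab = 0 iff aα(b) = 0). If R is LNZS, then every skew polynomial over R with all coefficients nilpotent is nilpotent in R[x; α], i.e., N(R)[x; α] ⊆ N(R[x; α]). -/
/-- The element of `S` represented by the finitely supported coefficient family `f`,
namely `∑ i, φ (f i) * x ^ i`. -/
def toSkewPoly {R S : Type*} [Ring R] [Ring S] (φ : R →+* S) (x : S) (f : ℕ →₀ R) : S :=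
  f.sum fun i a => φ a * x ^ i

/-- `S` is the skew polynomial ring `R[x; α]`: `R` embeds via `φ`, the indeterminate `x`
satisfies `x * w = α w * x`, and every element of `S` is uniquely of the form
`∑ i, φ (a i) * x ^ i`. -/
structure IsSkewPolynomialRing {R S : Type*} [Ring R] [Ring S]
    (α : R →+* R) (φ : R →+* S) (x : S) : Prop where
  skew_comm : ∀ w : R, x * φ w = φ (α w) * x
  repr_surj : ∀ s : S, ∃ f : ℕ →₀ R, toSkewPoly φ x f = s
  repr_indep : ∀ f : ℕ →₀ R, toSkewPoly φ x f = 0 → f = 0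

/-- The `α`-condition: `a * b = 0` iff `a * α b = 0`. -/
def AlphaCondition {R : Type*} [Ring R] (α : R →+* R) : Prop :=
  ∀ a b : R, a * b = 0 ↔ a * α b = 0

section AuxLemmas

variable {R : Type*} [Ring R]

/-- Insertion: if `u * b = 0` with `b` nilpotent in an LNZS ring, then `u * q * b = 0`. -/
lemma lnzs_insert (h : IsLNZS R) {b u : R} (hb : IsNilpotent b) (hu : u * b = 0) (q : R) :
    u * q * b = 0 := by
  obtain ⟨I, hI⟩ := h b hb
  exact (hI _).1 (I.mul_mem_right _ _ ((hI u).2 hu))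

/-- Bootstrapping along left annihilators of the powers of `a`: a product of ring elements
containing at least `c` occurrences of `a` left-annihilates `a ^ (n - c)`. -/
lemma aux_count [DecidableEq R] (h : IsLNZS R) {a : R} {n : ℕ} (ha : a ^ n = 0) :
    ∀ (l : List R), ∀ c, c ≤ n → c ≤ l.count a → l.prod * a ^ (n - c) = 0 := by
  intro l
  induction l using List.reverseRecOn with
  | nil =>
    intro c hc hcount
    simp only [List.count_nil, Nat.le_zero] at hcount
    subst hcount
    simp [ha]
  | append_singleton l b ih =>
    intro c hc hcount
    rw [List.prod_append, List.prod_singleton]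
    rcases Nat.eq_zero_or_pos c with rfl | hcpos
    · rw [Nat.sub_zero, ha, mul_zero]
    · by_cases hb : b = a
      · rw [hb]
        rw [hb] at hcount
        have hcnt : (l ++ [a]).count a = l.count a + 1 := by
          simp [List.count_append, List.count_singleton]
        have hc' : c - 1 ≤ l.count a := by omega
        have h0 := ih (c - 1) (by omega) hc'
        have hpow : a ^ (n - (c - 1)) = a * a ^ (n - c) := by
          rw [← pow_succ']
          congr 1
          omega
        rw [hpow] at h0
        rw [mul_assoc]
        exact h0
      · have hcnt : (l ++ [b]).count a = l.count a := by
          have : a ∉ [b] := by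
            simp only [List.mem_singleton]
            exact fun h' => hb h'.symm
          rw [List.count_append, List.count_eq_zero.2 this, Nat.add_zero]
        have h0 := ih c hc (by omega)
        rcases Nat.eq_zero_or_pos (n - c) with h1 | h1
        · rw [h1, pow_zero, mul_one] at h0
          rw [h1, pow_zero, mul_one, h0, zero_mul]
        · have hnil : IsNilpotent (a ^ (n - c)) := by
            refine ⟨n, ?_⟩
            rw [← pow_mul]
            have h2 : (n - c) * n = n + (n - c - 1) * n := by
              have h3 : n - c = (n - c - 1) + 1 := by omega
              conv_lhs => rw [h3]
              rw [add_mul, one_mul, add_comm]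
            rw [h2, pow_add, ha, zero_mul]
          exact lnzs_insert h hnil h0 b

lemma count_le_count_map [DecidableEq R] (f : ℕ →₀ R) (v : ℕ) :
    ∀ l : List ℕ, l.count v ≤ (l.map f).count (f v) := by
  intro l
  induction l with
  | nil => simp
  | cons i l ih =>
    rw [List.map_cons, List.count_cons, List.count_cons]
    by_cases hiv : i = v
    · subst hiv
      simp only [beq_self_eq_true, if_true]
      omega
    · have h1 : (i == v) = false := by simp [hiv]
      simp only [h1, Bool.false_eq_true, if_false]
      by_cases h2 : f i = f v
      · simp only [h2, beq_self_eq_true, if_true]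
        omega
      · have h3 : (f i == f v) = false := by simp [h2]
        simp only [h3, Bool.false_eq_true, if_false]
        omega

lemma pigeonhole_list (t : Finset ℕ) (n : ℕ) (l : List ℕ)
    (hlen : l.length = t.card * n + 1) (hmem : ∀ i ∈ l, i ∈ t) :
    ∃ v ∈ t, n ≤ l.count v := by
  by_contra hcon
  push_neg at hcon
  have hsub : l.toFinset ⊆ t := fun i hi => hmem i (List.mem_toFinset.1 hi)
  have hlen2 : ∑ v ∈ l.toFinset, l.count v = l.length := by
    simpa using Multiset.toFinset_sum_count_eq (l : Multiset ℕ)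
  have hbound : ∑ v ∈ l.toFinset, l.count v ≤ ∑ _v ∈ l.toFinset, n := by
    apply Finset.sum_le_sum
    intro v hv
    exact le_of_lt (hcon v (hsub hv))
  rw [Finset.sum_const, smul_eq_mul] at hbound
  have h3 : l.toFinset.card * n ≤ t.card * n := Nat.mul_le_mul_right _ (Finset.card_le_card hsub)
  have : t.card * n + 1 ≤ t.card * n := by
    rw [← hlen]
    omega
  exact Nat.not_succ_le_self _ this

variable {S : Type*} [Ring S] {α : R →+* R} {φ : R →+* S} {x : S}

/-- Untwisting with the `α`-condition: a middle factor may be untwisted. -/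
lemma alpha_untwist (hα : AlphaCondition α) (k : ℕ) (a b c : R) :
    a * (α^[k] b) * c = 0 ↔ a * b * c = 0 := by
  induction k generalizing b with
  | zero => simp
  | succ k ih =>
    rw [Function.iterate_succ_apply, ih (α b)]
    constructor
    · intro h1
      have h2 : a * α b * α c = 0 := (hα (a * α b) c).1 h1
      rw [mul_assoc, ← map_mul] at h2
      have h3 : a * (b * c) = 0 := (hα a (b * c)).2 h2
      rwa [← mul_assoc] at h3
    · intro h1
      rw [mul_assoc] at h1
      have h2 : a * α (b * c) = 0 := (hα a (b * c)).1 h1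
      rw [map_mul, ← mul_assoc] at h2
      exact (hα (a * α b) c).2 h2

lemma skew_pow_comm (hS : IsSkewPolynomialRing α φ x) (k : ℕ) (w : R) :
    x ^ k * φ w = φ (α^[k] w) * x ^ k := by
  induction k generalizing w with
  | zero => simp
  | succ k ih =>
    rw [pow_succ, Function.iterate_succ_apply]
    calc x ^ k * x * φ w = x ^ k * (x * φ w) := by rw [mul_assoc]
      _ = x ^ k * (φ (α w) * x) := by rw [hS.skew_comm]
      _ = (x ^ k * φ (α w)) * x := by rw [mul_assoc]
      _ = (φ (α^[k] (α w)) * x ^ k) * x := by rw [ih]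
      _ = φ (α^[k] (α w)) * (x ^ k * x) := by rw [mul_assoc]

lemma main_ind (hS : IsSkewPolynomialRing α φ x) (hα : AlphaCondition α) (f : ℕ →₀ R) :
    ∀ (m : ℕ) (u : R) (k : ℕ),
      (∀ l : List ℕ, l.length = m → u * (l.map f).prod = 0) →
      φ u * x ^ k * (toSkewPoly φ x f) ^ m = 0 := by
  intro m
  induction m with
  | zero =>
    intro u k hu
    have h0 : u = 0 := by simpa using hu [] rfl
    simp [h0]
  | succ m ih =>
    intro u k hu
    have step : φ u * x ^ k * toSkewPoly φ x f
        = f.sum fun i a => φ (u * α^[k] a) * x ^ (k + i) := by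
      unfold toSkewPoly
      rw [Finsupp.mul_sum]
      apply Finsupp.sum_congr
      intro i _
      calc φ u * x ^ k * (φ (f i) * x ^ i)
          = φ u * (x ^ k * φ (f i) * x ^ i) := by
            rw [mul_assoc]
            rw [← mul_assoc (x ^ k)]
        _ = φ u * (φ (α^[k] (f i)) * x ^ k * x ^ i) := by rw [skew_pow_comm hS]
        _ = (φ u * φ (α^[k] (f i))) * (x ^ k * x ^ i) := by
            rw [mul_assoc, mul_assoc]
        _ = φ (u * α^[k] (f i)) * x ^ (k + i) := by rw [← map_mul, pow_add]
    rw [pow_succ', ← mul_assoc, step, Finsupp.sum_mul]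
    apply Finset.sum_eq_zero
    intro i _
    apply ih
    intro l hl
    have h1 := hu (i :: l) (by simp [hl])
    rw [List.map_cons, List.prod_cons, ← mul_assoc] at h1
    exact (alpha_untwist hα k u (f i) ((l.map f).prod)).2 h1

end AuxLemmas

theorem nilpotent_coeffs_nilpotent {R S : Type*} [Ring R] [Ring S]
    (α : R →+* R) (φ : R →+* S) (x : S) (hS : IsSkewPolynomialRing α φ x)
    (hα : AlphaCondition α) (h : IsLNZS R) :
    ∀ f : ℕ →₀ R, (∀ i : ℕ, IsNilpotent (f i)) → IsNilpotent (toSkewPoly φ x f) := by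
  intro f hf
  classical
  set n : ℕ := (f.support.sup fun i => (hf i).choose) + 1 with hn_def
  have hn : ∀ i, (f i) ^ n = 0 := by
    intro i
    by_cases hi : i ∈ f.support
    · have hc := (hf i).choose_spec
      have hle : (hf i).choose ≤ n := by
        rw [hn_def]
        exact le_trans (Finset.le_sup (f := fun j => (hf j).choose) hi) (Nat.le_succ _)
      calc (f i) ^ n = (f i) ^ ((hf i).choose) * (f i) ^ (n - (hf i).choose) := by
            rw [← pow_add]
            congr 1
            omega
        _ = 0 := by rw [hc, zero_mul]
    · rw [Finsupp.notMem_support_iff.1 hi]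
      exact zero_pow (by omega)
  set m : ℕ := f.support.card * n + 1 with hm_def
  have key : ∀ l : List ℕ, l.length = m → (l.map f).prod = 0 := by
    intro l hl
    by_cases hmem : ∀ i ∈ l, i ∈ f.support
    · obtain ⟨v, hv, hcount⟩ := pigeonhole_list f.support n l hl hmem
      have hcount2 : n ≤ (l.map f).count (f v) :=
        le_trans hcount (count_le_count_map f v l)
      have := aux_count h (hn v) (l.map f) n le_rfl hcount2
      simpa using this
    · push_neg at hmem
      obtain ⟨i, hil, hins⟩ := hmem
      apply List.prod_eq_zero
      have hfi : f i = 0 := Finsupp.notMem_support_iff.1 hins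
      exact hfi ▸ List.mem_map_of_mem (f := f) hil
  have hz := main_ind hS hα f m 1 0 (fun l hl => by rw [one_mul]; exact key l hl)
  refine ⟨m, ?_⟩
  simpa using hz
end
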